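/- Let (T, M) be a local domain with residue field k and residue map π : T → k, and let D be an integral domain with fraction field k, viewed as a subring of k. If the pullback A := D ×_k T = π⁻¹(D) is perinormal, then both D and T are perinormal. -/

import Mathlib

/-- A ring homomorphism `f : R → S` satisfies going-down if whenever `p' ⊆ p` are primes
of `R` and `q` is a prime of `S` lying over `p`, there is a prime `q' ⊆ q` of `S` lying
over `p'`. -/
def GoesDown {R S : Type*} [CommRing R] [CommRing S] (f : R →+* S) : Prop :=
  ∀ ⦃p' p : Ideal R⦄, p'.IsPrime → p.IsPrime → p' ≤ p →
    ∀ ⦃q : Ideal S⦄, q.IsPrime → q.comap f = p →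
      ∃ q' : Ideal S, q'.IsPrime ∧ q' ≤ q ∧ q'.comap f = p'

/-- A subring `R` of a field `F` (to be thought of as the fraction field of `R`, so that
the overrings of `R` are the subrings of `F` containing `R`) is perinormal if every
going-down overring of `R` is flat as an `R`-module. -/
def IsPerinormalSubring {F : Type*} [Field F] (R : Subring F) : Prop :=
  ∀ S : Subring F, ∀ h : R ≤ S, GoesDown (Subring.inclusion h) →
    @Module.Flat R S _ _ (RingHom.toAlgebra (Subring.inclusion h)).toModule

/-!
Flatness of an overring `S ⊇ R` is Richman's colon condition `(R :_R s) S = S` for all `s ∈ S`.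
This condition survives enlarging `R`, and it descends along the residue map from
`π⁻¹(D) ⊆ π⁻¹(E)` to `D ⊆ E`; so both claims follow from perinormality of `A = π⁻¹(D)` once the
relevant overrings of `A` are shown to be going-down. Since `M ⊆ A ⊆ T` with `T` local, every
prime of `A` either contains `M` or lies strictly inside `M ∩ A`, and a prime of the second kind
is, as a set, already a prime of `T`. This gives going down for `A ⊆ T` (hence for `A ⊆ S` whenever
`T ⊆ S` is going-down), and for `π⁻¹(D) ⊆ π⁻¹(E)`: primes of the second kind come from `T`, those
of the first kind are handled modulo `M`, where the extension is `D ⊆ E`.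
-/

section Colon

variable {K : Type*} [Field K]

def colonIdeal (R S : Subring K) (G : Set K) : Ideal S :=
  Ideal.span {c : S | (c : K) ∈ R ∧ ∀ x ∈ G, (c : K) * x ∈ R}

def ColonCondition (R S : Subring K) : Prop :=
  ∀ s : S, colonIdeal R S {(s : K)} = ⊤

theorem colonIdeal_mono_left {R R' S : Subring K} (h : R ≤ R') (G : Set K) :
    colonIdeal R S G ≤ colonIdeal R' S G :=
  Ideal.span_mono fun _ hc => ⟨h hc.1, fun x hx => h (hc.2 x hx)⟩

theorem ColonCondition.mono_left {R R' S : Subring K} (hc : ColonCondition R S) (h : R ≤ R') :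
    ColonCondition R' S :=
  fun s => top_le_iff.1 (hc s ▸ colonIdeal_mono_left h _)

theorem colonIdeal_empty (R S : Subring K) : colonIdeal R S ∅ = ⊤ :=
  (Ideal.eq_top_iff_one _).2 (Ideal.subset_span ⟨R.one_mem, by simp⟩)

theorem colonIdeal_singleton_mul_le_insert (R S : Subring K) (x : K) (G : Set K) :
    colonIdeal R S {x} * colonIdeal R S G ≤ colonIdeal R S (insert x G) := by
  rw [colonIdeal, colonIdeal, Ideal.span_mul_span']
  refine Ideal.span_mono ?_
  rintro _ ⟨c, ⟨hcR, hcx⟩, c', ⟨hc'R, hc'G⟩, rfl⟩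
  refine ⟨by simpa using R.mul_mem hcR hc'R, ?_⟩
  rintro y (rfl | hy)
  · simpa [mul_right_comm] using R.mul_mem (hcx y rfl) hc'R
  · simpa [mul_assoc] using R.mul_mem hcR (hc'G y hy)

theorem ColonCondition.colonIdeal_eq_top {R S : Subring K} (hc : ColonCondition R S)
    {G : Set K} (hG : G.Finite) (hGS : G ⊆ S) : colonIdeal R S G = ⊤ := by
  induction G, hG using Set.Finite.induction_on with
  | empty => exact colonIdeal_empty R S
  | @insert x G _ _ ih =>
    have hx : x ∈ S := hGS (Set.mem_insert x G)
    have hxG := colonIdeal_singleton_mul_le_insert R S x G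
    rwa [show x = ((⟨x, hx⟩ : S) : K) from rfl, hc, ih (fun y hy => hGS (Or.inr hy)),
      Ideal.top_mul, top_le_iff] at hxG

theorem flat_of_colonCondition {R S : Subring K} (h : R ≤ S) (hc : ColonCondition R S) :
    @Module.Flat R S _ _ (RingHom.toAlgebra (Subring.inclusion h)).toModule := by
  let := (Subring.inclusion h).toAlgebra
  have hsmul (r : R) (s : S) : ((r • s : S) : K) = r * s := rfl
  refine Module.Flat.of_forall_isTrivialRelation fun {l f x} hfx => ?_
  have hfxK : ∑ i, (f i : K) * x i = 0 := by
    simpa [hsmul] using congrArg ((↑) : S → K) hfx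
  have h1 : (1 : S) ∈ colonIdeal R S (Set.range fun i => (x i : K)) := by
    rw [hc.colonIdeal_eq_top (Set.finite_range _) (Set.range_subset_iff.2 fun i => (x i).2)]
    trivial
  obtain ⟨n, y, c, hyc⟩ := Submodule.mem_span_set'.1 h1
  have hycK : ∑ j, (y j : K) * ((c j : S) : K) = 1 := by
    simpa using congrArg ((↑) : S → K) hyc
  have hcx (i : Fin l) (j : Fin n) : ((c j : S) : K) * x i ∈ R := (c j).2.2 _ ⟨i, rfl⟩
  refine ⟨n, fun i j => ⟨_, hcx i j⟩, y, fun i => Subtype.ext ?_, fun j => Subtype.ext ?_⟩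
  · calc (x i : K) = x i * ∑ j, (y j : K) * ((c j : S) : K) := by rw [hycK, mul_one]
      _ = _ := by
        simp only [Finset.mul_sum, AddSubmonoidClass.coe_finsetSum, hsmul]
        exact Finset.sum_congr rfl fun j _ => by ring
  · calc ((∑ i, f i * ⟨_, hcx i j⟩ : R) : K) = ((c j : S) : K) * ∑ i, (f i : K) * x i := by
          simp only [Finset.mul_sum, AddSubmonoidClass.coe_finsetSum, Subring.coe_mul]
          exact Finset.sum_congr rfl fun i _ => by ring
      _ = 0 := by rw [hfxK, mul_zero]

theorem colonCondition_of_flat {R S : Subring K} [IsFractionRing R K] (h : R ≤ S)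
    (hf : @Module.Flat R S _ _ (RingHom.toAlgebra (Subring.inclusion h)).toModule) :
    ColonCondition R S := by
  let := (Subring.inclusion h).toAlgebra
  have hsmul (r : R) (s : S) : ((r • s : S) : K) = r * s := rfl
  intro s
  obtain ⟨a, b, hb, hab⟩ := IsFractionRing.div_surjective R (s : K)
  change (a : K) / b = s at hab
  have hb0 : (b : K) ≠ 0 := by simpa using nonZeroDivisors.ne_zero hb
  have hrel : ∑ i, ![b, -a] i • ![s, 1] i = 0 := by
    apply Subtype.ext
    simp only [Fin.sum_univ_two, AddMemClass.coe_add, hsmul]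
    simp only [Matrix.cons_val_zero, Matrix.cons_val_one, ← hab, NegMemClass.coe_neg,
      OneMemClass.coe_one, mul_one, mul_div_cancel₀ _ hb0, add_neg_cancel, ZeroMemClass.coe_zero]
  obtain ⟨n, A, y, hxy, hA⟩ : Module.IsTrivialRelation ![b, -a] ![s, 1] :=
    Module.Flat.isTrivialRelation_of_sum_smul_eq_zero hrel
  have hcolon (j : Fin n) : (A 1 j : K) * s ∈ R := by
    have hj : (b : K) * A 0 j - a * A 1 j = 0 := by
      simpa [Fin.sum_univ_two, sub_eq_add_neg] using congrArg ((↑) : R → K) (hA j)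
    convert (A 0 j).2 using 1
    rw [← hab]
    field_simp
    linear_combination -hj
  rw [Ideal.eq_top_iff_one, show (1 : S) = ∑ j, A 1 j • y j from hxy 1]
  refine Ideal.sum_mem _ fun j _ => ?_
  rw [Algebra.smul_def]
  exact Ideal.mul_mem_right _ _
    (Ideal.subset_span ⟨(A 1 j).2, fun x hx => (Set.mem_singleton_iff.1 hx).symm ▸ hcolon j⟩)

end Colon

theorem GoesDown.comp {R S T : Type*} [CommRing R] [CommRing S] [CommRing T]
    {g : S →+* T} {f : R →+* S} (hg : GoesDown g) (hf : GoesDown f) : GoesDown (g.comp f) := by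
  intro p' p hp' hp hle q hq hqp
  obtain ⟨r', hr', hr'le, hr'p'⟩ := hf hp' hp hle (hq.comap g) (by rwa [Ideal.comap_comap])
  obtain ⟨q', hq', hq'le, hq'r'⟩ := hg hr' (hq.comap g) hr'le hq rfl
  exact ⟨q', hq', hq'le, by rw [← Ideal.comap_comap, hq'r', hr'p']⟩

theorem GoesDown.exists_of_comm_sq {A B D E : Type*}
    [CommRing A] [CommRing B] [CommRing D] [CommRing E]
    {i : A →+* B} {j : D →+* E} {ρA : A →+* D} {ρB : B →+* E} (hj : GoesDown j)
    (hsq : ρB.comp i = j.comp ρA) (hρA : Function.Surjective ρA)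
    (hρB : Function.Surjective ρB) {p' p : Ideal A} (hp' : p'.IsPrime) (hp : p.IsPrime)
    (hle : p' ≤ p) (hkerA : RingHom.ker ρA ≤ p') {q : Ideal B} (hq : q.IsPrime)
    (hqp : q.comap i = p) (hkerB : RingHom.ker ρB ≤ q) :
    ∃ q' : Ideal B, q'.IsPrime ∧ q' ≤ q ∧ q'.comap i = p' := by
  have hmapA {I : Ideal A} (hI : RingHom.ker ρA ≤ I) : (I.map ρA).comap ρA = I := by
    rw [Ideal.comap_map_of_surjective' ρA hρA, sup_eq_left.2 hI]
  have hmapB : (q.map ρB).comap ρB = q := by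
    rw [Ideal.comap_map_of_surjective' ρB hρB, sup_eq_left.2 hkerB]
  have hcomap : (q.map ρB).comap j = p.map ρA := by
    apply Ideal.comap_injective_of_surjective ρA hρA
    rw [Ideal.comap_comap, ← hsq, ← Ideal.comap_comap, hmapB, hqp, hmapA (hkerA.trans hle)]
  obtain ⟨r', hr', hr'le, hr'p'⟩ := hj (Ideal.map_isPrime_of_surjective hρA hkerA)
    (Ideal.map_isPrime_of_surjective hρA (hkerA.trans hle)) (Ideal.map_mono hle)
    (Ideal.map_isPrime_of_surjective hρB hkerB) hcomap
  refine ⟨r'.comap ρB, hr'.comap ρB, hmapB ▸ Ideal.comap_mono hr'le, ?_⟩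
  rw [Ideal.comap_comap, hsq, ← Ideal.comap_comap, hr'p', hmapA hkerA]

section LocalRing

open IsLocalRing

variable {A T : Type*} [CommRing A] [CommRing T] [IsLocalRing T] {f : A →+* T}

theorem le_or_le_comap_maximalIdeal (hf : Function.Injective f)
    (hM : (maximalIdeal T : Set T) ⊆ Set.range f) (p : Ideal A) [p.IsPrime] :
    (maximalIdeal T).comap f ≤ p ∨ p ≤ (maximalIdeal T).comap f := by
  refine or_iff_not_imp_left.2 fun hMp a ha => by_contra fun haM => ?_
  obtain ⟨m, hmM, hmp⟩ := SetLike.not_le_iff_exists.1 hMp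
  have hu : IsUnit (f a) := notMem_maximalIdeal.1 haM
  obtain ⟨c, hc⟩ := hM (Ideal.mul_mem_right (↑hu.unit⁻¹) _ hmM)
  have hcam : c * a = m := hf (by rw [map_mul, hc, mul_assoc, hu.val_inv_mul, mul_one])
  exact hmp (hcam ▸ Ideal.mul_mem_left _ c ha)

theorem exists_mul_eq_map_of_le_comap_maximalIdeal (hf : Function.Injective f)
    (hM : (maximalIdeal T : Set T) ⊆ Set.range f) {p : Ideal A} [hpp : p.IsPrime]
    (hp : p ≤ (maximalIdeal T).comap f) (t : T) {a : A} (ha : a ∈ p) :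
    ∃ c ∈ p, f c = t * f a := by
  obtain ⟨c, hc⟩ := hM (Ideal.mul_mem_left _ t (hp ha))
  refine ⟨c, ?_, hc⟩
  by_cases hMp : (maximalIdeal T).comap f ≤ p
  · exact hMp (show f c ∈ maximalIdeal T from hc ▸ Ideal.mul_mem_left _ t (hp ha))
  obtain ⟨m, hmM, hmp⟩ := SetLike.not_le_iff_exists.1 hMp
  obtain ⟨d, hd⟩ := hM (Ideal.mul_mem_left _ t hmM)
  have hcm : c * m = d * a := hf (by rw [map_mul, map_mul, hc, hd]; ring)
  exact (hpp.mem_or_mem (hcm ▸ Ideal.mul_mem_left _ d ha)).resolve_right hmp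

theorem exists_isPrime_comap_eq_of_le_comap_maximalIdeal (hf : Function.Injective f)
    (hM : (maximalIdeal T : Set T) ⊆ Set.range f) {p : Ideal A} [hpp : p.IsPrime]
    (hp : p ≤ (maximalIdeal T).comap f) :
    ∃ Q : Ideal T, Q.IsPrime ∧ Q.comap f = p ∧ (Q : Set T) ⊆ f '' p := by
  have hmul := exists_mul_eq_map_of_le_comap_maximalIdeal hf hM hp
  let Q : Ideal T :=
    { carrier := f '' p
      add_mem' := by
        rintro _ _ ⟨a, ha, rfl⟩ ⟨b, hb, rfl⟩
        exact ⟨a + b, p.add_mem ha hb, map_add f a b⟩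
      zero_mem' := ⟨0, p.zero_mem, map_zero f⟩
      smul_mem' := by
        rintro t _ ⟨a, ha, rfl⟩
        exact hmul t ha }
  have hQ : Q.comap f = p := Ideal.ext fun a => hf.mem_set_image
  refine ⟨Q, ⟨fun hQ1 => hpp.ne_top ?_, fun {s t} hst => ?_⟩, hQ, le_rfl⟩
  · rw [← hQ, hQ1, Ideal.comap_top]
  by_cases hs : IsUnit s
  · obtain ⟨a, ha, hat⟩ := hst
    obtain ⟨c, hc, hct⟩ := hmul (↑hs.unit⁻¹) ha
    exact Or.inr ⟨c, hc, by rw [hct, hat, ← mul_assoc, hs.val_inv_mul, one_mul]⟩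
  by_cases ht : IsUnit t
  · obtain ⟨a, ha, hat⟩ := hst
    obtain ⟨c, hc, hct⟩ := hmul (↑ht.unit⁻¹) ha
    exact Or.inl ⟨c, hc, by rw [hct, hat, mul_comm s, ← mul_assoc, ht.val_inv_mul, one_mul]⟩
  obtain ⟨a, rfl⟩ := hM ((mem_maximalIdeal s).2 hs)
  obtain ⟨b, rfl⟩ := hM ((mem_maximalIdeal t).2 ht)
  rw [← map_mul] at hst
  exact (hpp.mem_or_mem (hf.mem_set_image.1 hst)).imp (Set.mem_image_of_mem f)
    (Set.mem_image_of_mem f)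

theorem goesDown_of_maximalIdeal_subset_range (hf : Function.Injective f)
    (hM : (maximalIdeal T : Set T) ⊆ Set.range f) : GoesDown f := by
  intro p' p hp' hp hle q hq hqp
  have hpM : p ≤ (maximalIdeal T).comap f := hqp ▸ Ideal.comap_mono (le_maximalIdeal hq.ne_top)
  obtain ⟨Q, hQ, hQp', hQsub⟩ :=
    exists_isPrime_comap_eq_of_le_comap_maximalIdeal hf hM (hle.trans hpM)
  refine ⟨Q, hQ, fun t ht => ?_, hQp'⟩
  obtain ⟨a, ha, rfl⟩ := hQsub ht
  exact (hqp ▸ hle ha : a ∈ q.comap f)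

theorem goesDown_of_goesDown_residue {B D E : Type*} [CommRing B] [CommRing D] [CommRing E]
    {i : A →+* B} {g : B →+* T} (hg : Function.Injective g)
    (hgi : Function.Injective (g.comp i))
    (hM : (maximalIdeal T : Set T) ⊆ Set.range (g.comp i))
    {j : D →+* E} {ρA : A →+* D} {ρB : B →+* E} (hsq : ρB.comp i = j.comp ρA)
    (hρA : Function.Surjective ρA) (hρB : Function.Surjective ρB)
    (hkerA : RingHom.ker ρA = (maximalIdeal T).comap (g.comp i))
    (hkerB : RingHom.ker ρB = (maximalIdeal T).comap g) (hj : GoesDown j) : GoesDown i := by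
  intro p' p hp' hp hle q hq hqp
  rcases le_or_le_comap_maximalIdeal hgi hM p' with hMp' | hp'M
  · refine hj.exists_of_comm_sq hsq hρA hρB hp' hp hle (hkerA ▸ hMp') hq hqp fun b hb => ?_
    rw [hkerB] at hb
    obtain ⟨a, ha⟩ := hM hb
    rw [← hg ha]
    have haM : (g.comp i) a ∈ maximalIdeal T := ha ▸ hb
    exact (hqp ▸ hle (hMp' haM) : a ∈ q.comap i)
  · obtain ⟨Q, hQ, hQp', hQsub⟩ := exists_isPrime_comap_eq_of_le_comap_maximalIdeal hgi hM hp'M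
    refine ⟨Q.comap g, hQ.comap g, fun b hb => ?_, by rw [Ideal.comap_comap, hQp']⟩
    obtain ⟨a, ha, hab⟩ := hQsub hb
    rw [← hg hab]
    exact (hqp ▸ hle ha : a ∈ q.comap i)

end LocalRing

section ResiduePullback

open IsLocalRing

variable {K k : Type*} [Field K] [Field k] (T : Subring K) (π : T →+* k)

abbrev Subring.residuePullback (E : Subring k) : Subring K := (E.comap π).map T.subtype

namespace Subring

variable {T π}

theorem coe_mem_residuePullback {E : Subring k} {t : T} :
    (t : K) ∈ T.residuePullback π E ↔ π t ∈ E := by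
  simp [residuePullback]

variable (T π)

theorem residuePullback_le (E : Subring k) : T.residuePullback π E ≤ T := by
  rintro _ ⟨t, _, rfl⟩
  exact t.2

theorem residuePullback_mono {D E : Subring k} (h : D ≤ E) :
    T.residuePullback π D ≤ T.residuePullback π E := by
  rintro _ ⟨t, ht, rfl⟩
  exact ⟨t, h ht, rfl⟩

def residuePullbackHom (E : Subring k) : T.residuePullback π E →+* E :=
  (π.comp (inclusion (T.residuePullback_le π E))).codRestrict E fun x =>
    coe_mem_residuePullback (T := T) (π := π).1 x.2

theorem residuePullbackHom_comp_inclusion {D E : Subring k} (h : D ≤ E) :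
    (T.residuePullbackHom π E).comp (inclusion (T.residuePullback_mono π h)) =
      (inclusion h).comp (T.residuePullbackHom π D) :=
  rfl

variable {π} (hπ : Function.Surjective π)
include hπ

theorem residuePullbackHom_surjective (E : Subring k) :
    Function.Surjective (T.residuePullbackHom π E) := by
  intro e
  obtain ⟨t, ht⟩ := hπ e
  exact ⟨⟨t, coe_mem_residuePullback.2 (ht ▸ e.2)⟩, Subtype.ext ht⟩

theorem exists_eq_div_residuePullback (D : Subring k) [IsFractionRing D k] (t : T) :
    ∃ a b : T.residuePullback π D, (b : K) ≠ 0 ∧ (t : K) = a / b := by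
  obtain ⟨d, d', hd', hdd'⟩ := IsFractionRing.div_surjective D (π t)
  have hd'0 : (d' : k) ≠ 0 := by simpa using nonZeroDivisors.ne_zero hd'
  obtain ⟨w, hw⟩ := hπ d'
  have hw0 : w ≠ 0 := by
    rintro rfl
    exact hd'0 (by simpa using hw.symm)
  have htw : π (t * w) = d := by
    rw [map_mul, hw, ← hdd']
    exact div_mul_cancel₀ _ hd'0
  refine ⟨⟨_, coe_mem_residuePullback.2 (htw ▸ d.2)⟩,
    ⟨_, coe_mem_residuePullback.2 (hw ▸ d'.2)⟩, by simpa using hw0, ?_⟩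
  simp [mul_div_cancel_right₀ _ (show (w : K) ≠ 0 by simpa using hw0)]

theorem isFractionRing_residuePullback [IsFractionRing T K] (D : Subring k) [IsFractionRing D k] :
    IsFractionRing (T.residuePullback π D) K := by
  refine IsFractionRing.of_field _ _ fun z => ?_
  obtain ⟨t, u, -, rfl⟩ := IsFractionRing.div_surjective T z
  obtain ⟨a, b, -, hab⟩ := T.exists_eq_div_residuePullback hπ D t
  obtain ⟨a', b', -, hab'⟩ := T.exists_eq_div_residuePullback hπ D u
  refine ⟨a * b', b * a', ?_⟩
  change (t : K) / u = (a * b' : K) / (b * a')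
  rw [hab, hab', div_div_div_eq]

theorem colonCondition_of_residuePullback {D E : Subring k}
    (h : ColonCondition (T.residuePullback π D) (T.residuePullback π E)) :
    ColonCondition D E := by
  intro e
  obtain ⟨t, ht⟩ := hπ e
  have hmap := congrArg (Ideal.map (T.residuePullbackHom π E))
    (h ⟨t, coe_mem_residuePullback.2 (ht ▸ e.2)⟩)
  rw [Ideal.map_top, colonIdeal, Ideal.map_span] at hmap
  rw [eq_top_iff, ← hmap]
  refine Ideal.span_mono ?_
  rintro _ ⟨c, ⟨hcD, hct⟩, rfl⟩
  refine ⟨coe_mem_residuePullback (T := T) (π := π).1 hcD, fun x hx => ?_⟩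
  rw [Set.mem_singleton_iff.1 hx, ← ht]
  exact map_mul π _ t ▸ coe_mem_residuePullback (T := T) (π := π).1 (hct _ rfl)

omit hπ

variable [IsLocalRing T] (hker : RingHom.ker π = maximalIdeal T)
include hker

theorem ker_residuePullbackHom (E : Subring k) :
    RingHom.ker (T.residuePullbackHom π E) =
      (maximalIdeal T).comap (inclusion (T.residuePullback_le π E)) := by
  ext x
  rw [RingHom.mem_ker, Ideal.mem_comap, ← hker, RingHom.mem_ker, ← Subtype.val_inj]
  rfl

theorem maximalIdeal_subset_range_inclusion_residuePullback_le (E : Subring k) :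
    (maximalIdeal T : Set T) ⊆ Set.range (inclusion (T.residuePullback_le π E)) := by
  intro t ht
  have : π t = 0 := by rwa [← RingHom.mem_ker, hker]
  exact ⟨⟨t, coe_mem_residuePullback.2 (this ▸ E.zero_mem)⟩, rfl⟩

theorem goesDown_inclusion_residuePullback_le (E : Subring k) :
    GoesDown (inclusion (T.residuePullback_le π E)) :=
  goesDown_of_maximalIdeal_subset_range (inclusion_injective _)
    (T.maximalIdeal_subset_range_inclusion_residuePullback_le hker E)

theorem goesDown_inclusion_residuePullback_mono (hπ : Function.Surjective π) {D E : Subring k}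
    (h : D ≤ E) (hDE : GoesDown (inclusion h)) :
    GoesDown (inclusion (T.residuePullback_mono π h)) :=
  goesDown_of_goesDown_residue (inclusion_injective (T.residuePullback_le π E))
    (inclusion_injective (T.residuePullback_le π D))
    (T.maximalIdeal_subset_range_inclusion_residuePullback_le hker D)
    (T.residuePullbackHom_comp_inclusion π h) (T.residuePullbackHom_surjective hπ D)
    (T.residuePullbackHom_surjective hπ E) (T.ker_residuePullbackHom hker D)
    (T.ker_residuePullbackHom hker E) hDE

end Subring

end ResiduePullback

theorem stmt_13 {K k : Type*} [Field K] [Field k] (T : Subring K)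
    [IsLocalRing T] [IsFractionRing T K]
    (π : T →+* k) (hπ : Function.Surjective π)
    (hker : RingHom.ker π = IsLocalRing.maximalIdeal T)
    (D : Subring k) [IsFractionRing D k]
    (hA : IsPerinormalSubring ((D.comap π).map T.subtype)) :
    IsPerinormalSubring D ∧ IsPerinormalSubring T := by
  have := T.isFractionRing_residuePullback hπ D
  have hAT := T.residuePullback_le π D
  refine ⟨fun E hDE hgd => ?_, fun S hTS hgd => ?_⟩
  · have hflat := hA _ (T.residuePullback_mono π hDE)
      (T.goesDown_inclusion_residuePullback_mono hker hπ hDE hgd)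
    exact flat_of_colonCondition hDE
      (T.colonCondition_of_residuePullback hπ (colonCondition_of_flat _ hflat))
  · have hflat := hA S (hAT.trans hTS)
      (hgd.comp (T.goesDown_inclusion_residuePullback_le hker D))
    exact flat_of_colonCondition hTS ((colonCondition_of_flat _ hflat).mono_left hAT)
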